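/- Gradient of the expected initial soft value: under the soft Bellman setting with bounded value gradients, ∇_λ Σ_s P_0(s) V_λ(s) = Σ_{s,a} ρ^{π_λ}(s,a) ∇_λ R_λ(s,a), where ρ^{π_λ} is the discounted occupancy measure with initial distribution P_0. -/

import Mathlib

/-!
Differentiating the soft Bellman equations, with the softmax policy appearing as the gradient of
log-sum-exp, shows that the value gradients `F s = ∇V(s)` solve the policy-evaluation equation
`F s = Σ_a π(a|s) (∇R(s,a) + γ Σ_{s'} T(s'|s,a) F s')`. Unrolling it `N` times against the state
distributions `P_τ` writes `Σ_s P_0(s) F s` as the first `N` terms of the occupancy series plus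
`γ^N Σ_s P_N(s) F s`. Propagation by a stochastic kernel does not increase `Σ_s |P_τ(s)|`, so this
remainder tends to zero.
-/

open Finset Filter Topology

section LogSumExp

variable {A E : Type*} [Fintype A] [Nonempty A] [NormedAddCommGroup E] [NormedSpace ℝ E]

theorem sum_exp_pos (q : A → ℝ) : 0 < ∑ a, Real.exp (q a) :=
  sum_pos (fun _ _ => Real.exp_pos _) univ_nonempty

theorem exp_div_sum_exp_mem_stdSimplex (q : A → ℝ) :
    (fun a => Real.exp (q a) / ∑ a', Real.exp (q a')) ∈ stdSimplex ℝ A :=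
  ⟨fun a => by positivity, by rw [← sum_div, div_self (sum_exp_pos q).ne']⟩

theorem HasFDerivAt.log_sum_exp {f : A → E → ℝ} {f' : A → E →L[ℝ] ℝ} {x : E}
    (hf : ∀ a, HasFDerivAt (f a) (f' a) x) :
    HasFDerivAt (fun y => Real.log (∑ a, Real.exp (f a y)))
      (∑ a, (Real.exp (f a x) / ∑ a', Real.exp (f a' x)) • f' a) x := by
  convert (HasFDerivAt.fun_sum fun a _ => (hf a).exp).log (sum_exp_pos fun a => f a x).ne' using 1
  simp only [smul_sum, smul_smul, div_eq_inv_mul]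

end LogSumExp

section Occupancy

variable {S A : Type*} [Fintype S] [Fintype A]

def propagate (pol : S → A → ℝ) (T : S → A → S → ℝ) (x : S → ℝ) : S → ℝ :=
  fun s' => ∑ s, ∑ a, x s * pol s a * T s a s'

noncomputable def occupancy (γ : ℝ) (P : ℕ → S → ℝ) (pol : S → A → ℝ) (s : S) (a : A) : ℝ :=
  ∑' τ, γ ^ τ * (P τ s * pol s a)

variable {pol : S → A → ℝ} {T : S → A → S → ℝ}

theorem sum_abs_propagate_le (hpol : ∀ s, pol s ∈ stdSimplex ℝ A)
    (hT : ∀ s a, T s a ∈ stdSimplex ℝ S) (x : S → ℝ) :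
    ∑ s', |propagate pol T x s'| ≤ ∑ s, |x s| :=
  calc ∑ s', |propagate pol T x s'|
      ≤ ∑ s', ∑ s, ∑ a, |x s| * pol s a * T s a s' := by
        refine sum_le_sum fun s' _ => (abs_sum_le_sum_abs _ _).trans <|
          sum_le_sum fun s _ => (abs_sum_le_sum_abs _ _).trans_eq <| sum_congr rfl fun a _ => ?_
        rw [abs_mul, abs_mul, abs_of_nonneg ((hpol s).1 a), abs_of_nonneg ((hT s a).1 s')]
    _ = ∑ s, |x s| := by
        rw [sum_comm]
        refine sum_congr rfl fun s _ => ?_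
        rw [sum_comm]
        simp only [← mul_sum, (hT s _).2, mul_one, (hpol s).2]

theorem sum_abs_le_of_propagate (hpol : ∀ s, pol s ∈ stdSimplex ℝ A)
    (hT : ∀ s a, T s a ∈ stdSimplex ℝ S) {P : ℕ → S → ℝ}
    (hP : ∀ τ, P (τ + 1) = propagate pol T (P τ)) (τ : ℕ) :
    ∑ s, |P τ s| ≤ ∑ s, |P 0 s| := by
  induction τ with
  | zero => rfl
  | succ τ ih => exact (hP τ ▸ sum_abs_propagate_le hpol hT (P τ)).trans ih

theorem summable_geometric_mul_of_abs_le {γ : ℝ} (hγ0 : 0 ≤ γ) (hγ1 : γ < 1) {u : ℕ → ℝ}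
    {B : ℝ} (hu : ∀ τ, |u τ| ≤ B) : Summable fun τ => γ ^ τ * u τ := by
  refine ((summable_geometric_of_lt_one hγ0 hγ1).mul_right B).of_norm_bounded fun τ => ?_
  rw [Real.norm_eq_abs, abs_mul, abs_of_nonneg (pow_nonneg hγ0 τ)]
  exact mul_le_mul_of_nonneg_left (hu τ) (pow_nonneg hγ0 τ)

section Bellman

variable {E : Type*} [AddCommGroup E] [Module ℝ E] {γ : ℝ} {F : S → E} {G : S → A → E}

theorem sum_smul_eq_of_bellman
    (hF : ∀ s, F s = ∑ a, pol s a • (G s a + γ • ∑ s', T s a s' • F s')) (x : S → ℝ) :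
    ∑ s, x s • F s =
      ∑ s, ∑ a, (x s * pol s a) • G s a + γ • ∑ s', propagate pol T x s' • F s' := by
  have hstep : ∀ s, x s • F s = ∑ a, (x s * pol s a) • G s a
      + γ • ∑ s', ∑ a, (x s * pol s a * T s a s') • F s' := fun s => by
    rw [hF s, smul_sum, sum_comm, smul_sum, ← sum_add_distrib]
    refine sum_congr rfl fun a _ => ?_
    simp only [smul_add, smul_sum, smul_smul]
    exact congrArg _ (sum_congr rfl fun s' _ => by congr 1; ring)
  simp only [sum_congr rfl fun s _ => hstep s, sum_add_distrib, ← smul_sum, propagate, sum_smul]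
  exact congrArg _ (congrArg _ sum_comm)

theorem sum_smul_eq_sum_range_add_tail
    (hF : ∀ s, F s = ∑ a, pol s a • (G s a + γ • ∑ s', T s a s' • F s'))
    {P : ℕ → S → ℝ} (hP : ∀ τ, P (τ + 1) = propagate pol T (P τ)) (N : ℕ) :
    ∑ s, P 0 s • F s =
      ∑ τ ∈ range N, ∑ s, ∑ a, (γ ^ τ * (P τ s * pol s a)) • G s a
        + γ ^ N • ∑ s, P N s • F s := by
  induction N with
  | zero => simp
  | succ N ih =>
    rw [ih, sum_smul_eq_of_bellman hF, ← hP, sum_range_succ, smul_add, smul_smul, ← pow_succ,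
      add_assoc, smul_sum]
    simp only [smul_sum, smul_smul]

end Bellman

theorem sum_smul_eq_sum_occupancy_smul {E : Type*} [NormedAddCommGroup E] [NormedSpace ℝ E]
    {γ : ℝ} (hγ0 : 0 ≤ γ) (hγ1 : γ < 1) (hpol : ∀ s, pol s ∈ stdSimplex ℝ A)
    (hT : ∀ s a, T s a ∈ stdSimplex ℝ S) {F : S → E} {G : S → A → E}
    (hF : ∀ s, F s = ∑ a, pol s a • (G s a + γ • ∑ s', T s a s' • F s'))
    {P : ℕ → S → ℝ} (hP : ∀ τ, P (τ + 1) = propagate pol T (P τ)) :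
    ∑ s, P 0 s • F s = ∑ s, ∑ a, occupancy γ P pol s a • G s a := by
  have hsumm : ∀ s, Summable fun τ => γ ^ τ * P τ s := fun s =>
    summable_geometric_mul_of_abs_le hγ0 hγ1 fun τ =>
      (single_le_sum (fun s' _ => abs_nonneg (P τ s')) (mem_univ s)).trans
        (sum_abs_le_of_propagate hpol hT hP τ)
  have htail : Tendsto (fun N => γ ^ N • ∑ s, P N s • F s) atTop (𝓝 0) := by
    simp_rw [smul_sum, smul_smul]
    simpa using tendsto_finsetSum univ fun s _ => (hsumm s).tendsto_atTop_zero.smul_const (F s)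
  have hocc : HasSum (fun τ => ∑ s, ∑ a, (γ ^ τ * (P τ s * pol s a)) • G s a)
      (∑ s, ∑ a, occupancy γ P pol s a • G s a) := by
    refine hasSum_sum fun s _ => hasSum_sum fun a _ => HasSum.smul_const ?_ (G s a)
    simp_rw [occupancy, ← mul_assoc]
    exact ((hsumm s).mul_right (pol s a)).hasSum
  refine tendsto_nhds_unique ?_ hocc.tendsto_sum_nat
  have hpartial : ∀ N, ∑ τ ∈ range N, ∑ s, ∑ a, (γ ^ τ * (P τ s * pol s a)) • G s a =
      ∑ s, P 0 s • F s - γ ^ N • ∑ s, P N s • F s := fun N =>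
    eq_sub_of_add_eq (sum_smul_eq_sum_range_add_tail hF hP N).symm
  simpa [hpartial] using tendsto_const_nhds.sub htail

end Occupancy

theorem expected_initial_value_gradient_general {d : ℕ} {S A : Type} [Fintype S] [Fintype A]
    [Nonempty A]
    (γ : ℝ) (hγ0 : 0 ≤ γ) (hγ1 : γ < 1)
    (P0 : S → ℝ)
    (T : S → A → S → ℝ) (hT : ∀ s a s', 0 ≤ T s a s')
    (hTsum : ∀ s a, ∑ s', T s a s' = 1)
    (R Q : (Fin d → ℝ) → S → A → ℝ) (V : (Fin d → ℝ) → S → ℝ)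
    (hR : ∀ s a, Differentiable ℝ (fun l => R l s a))
    (hV : ∀ s, Differentiable ℝ (fun l => V l s))
    (l : Fin d → ℝ)
    (hQ : ∀ l' s a, Q l' s a = R l' s a + γ * ∑ s', T s a s' * V l' s')
    (hVdef : ∀ l' s, V l' s = Real.log (∑ a, Real.exp (Q l' s a)))
    (pol : S → A → ℝ)
    (hpol : ∀ s a, pol s a = Real.exp (Q l s a) / ∑ a', Real.exp (Q l s a'))
    (PL : ℕ → S → ℝ) (hPL0 : ∀ s, PL 0 s = P0 s)
    (hPLrec : ∀ τ s', PL (τ + 1) s' = ∑ s, ∑ a, PL τ s * pol s a * T s a s') :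
    fderiv ℝ (fun l' => ∑ s, P0 s * V l' s) l
      = ∑ s, ∑ a,
          (∑' τ : ℕ, γ ^ τ * (PL τ s * pol s a)) •
            fderiv ℝ (fun l' => R l' s a) l := by
  set F := fun s => fderiv ℝ (fun l' => V l' s) l
  set G := fun s a => fderiv ℝ (fun l' => R l' s a) l
  have hQ' : ∀ s a, HasFDerivAt (fun l' => Q l' s a) (G s a + γ • ∑ s', T s a s' • F s') l :=
    fun s a => by
      simp_rw [hQ]
      exact (hR s a l).hasFDerivAt.add <| (HasFDerivAt.fun_sum fun s' _ =>
        (hV s' l).hasFDerivAt.const_mul (T s a s')).const_mul γ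
  have hbellman : ∀ s, F s = ∑ a, pol s a • (G s a + γ • ∑ s', T s a s' • F s') := fun s => by
    refine HasFDerivAt.fderiv ?_
    simp_rw [hVdef, hpol]
    exact HasFDerivAt.log_sum_exp (hQ' s)
  have hpolΔ : ∀ s, pol s ∈ stdSimplex ℝ A := fun s => by
    simpa only [← hpol] using exp_div_sum_exp_mem_stdSimplex (Q l s)
  have hLHS : HasFDerivAt (fun l' => ∑ s, P0 s * V l' s) (∑ s, P0 s • F s) l :=
    HasFDerivAt.fun_sum fun s _ => (hV s l).hasFDerivAt.const_mul (P0 s)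
  rw [hLHS.fderiv]
  simp_rw [← hPL0]
  exact sum_smul_eq_sum_occupancy_smul hγ0 hγ1 hpolΔ (fun s a => ⟨hT s a, hTsum s a⟩) hbellman
    fun τ => funext (hPLrec τ)

/-- Gradient of the expected initial soft value:
`∇ Σ_s P₀(s) V(s) = Σ_{s,a} ρ^{π_λ}(s,a) ∇R(s,a)`. -/
theorem expected_initial_value_gradient {d : ℕ} {S A : Type} [Fintype S] [Fintype A]
    [Nonempty S] [Nonempty A]
    (γ : ℝ) (hγ0 : 0 ≤ γ) (hγ1 : γ < 1)
    (P0 : S → ℝ) (hP0 : ∀ s, 0 ≤ P0 s) (hP0sum : ∑ s, P0 s = 1)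
    (T : S → A → S → ℝ) (hT : ∀ s a s', 0 ≤ T s a s')
    (hTsum : ∀ s a, ∑ s', T s a s' = 1)
    (R Q : (Fin d → ℝ) → S → A → ℝ) (V : (Fin d → ℝ) → S → ℝ)
    (hR : ∀ s a, Differentiable ℝ (fun l => R l s a))
    (hV : ∀ s, Differentiable ℝ (fun l => V l s))
    (l : Fin d → ℝ)
    (hbound : ∃ C, ∀ s, ‖fderiv ℝ (fun l' => V l' s) l‖ ≤ C)
    (hQ : ∀ l' s a, Q l' s a = R l' s a + γ * ∑ s', T s a s' * V l' s')
    (hVdef : ∀ l' s, V l' s = Real.log (∑ a, Real.exp (Q l' s a)))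
    (pol : S → A → ℝ)
    (hpol : ∀ s a, pol s a = Real.exp (Q l s a) / ∑ a', Real.exp (Q l s a'))
    (PL : ℕ → S → ℝ) (hPL0 : ∀ s, PL 0 s = P0 s)
    (hPLrec : ∀ τ s', PL (τ + 1) s' = ∑ s, ∑ a, PL τ s * pol s a * T s a s') :
    fderiv ℝ (fun l' => ∑ s, P0 s * V l' s) l
      = ∑ s, ∑ a,
          (∑' τ : ℕ, γ ^ τ * (PL τ s * pol s a)) •
            fderiv ℝ (fun l' => R l' s a) l :=
  expected_initial_value_gradient_general γ hγ0 hγ1 P0 T hT hTsum R Q V hR hV l hQ hVdef pol hpol PL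
    hPL0 hPLrec
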